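/- arXiv:1907.06019 — 7 statements merged into one kernel-verified Lean document; each statement's English description precedes it below -/
import Mathlib

section
/- Let V = ℝ^N and let C_1, …, C_m be proper linear subspaces of V. Then there exists a nonzero real polynomial G in N² variables f_{ij} (1 ≤ i, j ≤ N) such that whenever a real N×N matrix F = (f_{ij}) satisfies G(F) ≠ 0, the matrix F is invertible and for every subset J ⊆ {1,…,N} and every 1 ≤ i ≤ m, the projection π^F_J satisfies dim π^F_J(C_i) = min{dim C_i, |J|}. -/
/-!
Fix a subspace `C` of dimension `d` and a matrix `B` whose columns form a basis of `C`. For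
invertible `F`, the image `π^F_J(C)` is spanned by the columns of `F D_J F⁻¹ B`, whose rank is
the rank of the rows indexed by `J` of `F⁻¹ B`. If all `d × d` minors of `F⁻¹ B` are nonzero,
any `≤ d` of its rows are independent, so this rank is `min d |J|`. Since
`adj F = det F • F⁻¹`, each such minor is, up to the factor `(det F)^d`, the value at `F` of a
minor of `adj(X) B`, a polynomial in the entries `X` of `F`. That polynomial is nonzero: choose
`F` sending the standard basis vectors in the rows of the minor to the basis of `C`, which
makes the minor of `F⁻¹ B` the identity. Take `G` to be `det X` times all these minors.
-/

/-- The projection `π^F_J : ℝ^N → span{f_j : j ∈ J}` determined by the columns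
`f_1, …, f_N` of `F`: it fixes `f_j` for `j ∈ J` and kills `f_j` for `j ∉ J`.
As a matrix it is `F * D_J * F⁻¹`, where `D_J` is the diagonal 0/1-matrix of `J`. -/
noncomputable def projMap (N : ℕ) (F : Matrix (Fin N) (Fin N) ℝ) (J : Finset (Fin N)) :
    (Fin N → ℝ) →ₗ[ℝ] (Fin N → ℝ) :=
  Matrix.toLin' (F * Matrix.diagonal (fun j => if j ∈ J then (1 : ℝ) else 0) * F⁻¹)

open Module Matrix MvPolynomial

theorem Module.Basis.sumExtend_inl {K V ι : Type*} [Field K] [AddCommGroup V] [Module K V]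
    {c : ι → V} (hc : LinearIndependent K c) (i : ι) : Basis.sumExtend hc (Sum.inl i) = c i := by
  simp only [Basis.sumExtend, Equiv.trans_def, Basis.coe_reindex, Basis.coe_extend,
    Function.comp_apply]
  rfl

theorem LinearIndependent.exists_basis_comp_embedding_eq {K V ι κ : Type*} [Field K]
    [AddCommGroup V] [Module K V] [FiniteDimensional K V] [Fintype κ]
    (hκ : finrank K V = Fintype.card κ) {c : ι → V} (hc : LinearIndependent K c) (σ : ι ↪ κ) :
    ∃ v : Basis κ K V, v ∘ σ = c := by
  classical
  let b := Basis.sumExtend hc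
  have : Finite (ι ⊕ Basis.sumExtendIndex hc) := Module.Finite.finite_basis b
  have : Fintype ι := Fintype.ofInjective σ σ.injective
  have : Fintype (Basis.sumExtendIndex hc) :=
    have := Finite.sum_right (β := Basis.sumExtendIndex hc) ι; Fintype.ofFinite _
  have hcard : Fintype.card (Basis.sumExtendIndex hc) = Fintype.card {k // k ∉ Set.range σ} := by
    have := (finrank_eq_card_basis b).symm.trans hκ
    rw [Fintype.card_sum] at this
    rw [Fintype.card_subtype_compl, Set.card_range_of_injective σ.injective]
    omega
  let e : ι ⊕ Basis.sumExtendIndex hc ≃ κ :=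
    (Equiv.sumCongr σ.toEquivRange (Fintype.equivOfCardEq hcard)).trans
      (Equiv.sumCompl (· ∈ Set.range σ))
  have he : ∀ i, e.symm (σ i) = Sum.inl i := fun i => by
    rw [Equiv.symm_apply_eq]; rfl
  exact ⟨b.reindex e, funext fun i => by simp [he, b, Basis.sumExtend_inl]⟩

namespace Matrix

section Rows

variable {K m n : Type*} [Field K] [Fintype m] [Fintype n] [DecidableEq n]

theorem linearIndepOn_row_of_det_submatrix_ne_zero {A : Matrix m n K}
    (hA : ∀ σ : n ↪ m, (A.submatrix σ id).det ≠ 0) (hnm : Fintype.card n ≤ Fintype.card m)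
    {s : Finset m} (hs : s.card ≤ Fintype.card n) : LinearIndepOn K A.row s := by
  obtain ⟨t, hst, ht⟩ := Finset.exists_superset_card_eq hs hnm
  let σ : n ↪ m := (Fintype.equivOfCardEq (by simp [ht]) : n ≃ t).toEmbedding.trans
    (Function.Embedding.subtype _)
  have hσ : Set.range σ = t := by
    rw [Function.Embedding.coe_trans, Set.range_comp]; simp
  have hσA : LinearIndependent K (A.row ∘ σ) := linearIndependent_rows_of_det_ne_zero (hA σ)
  exact (hσ ▸ (linearIndepOn_range_iff σ.injective A.row).2 hσA).mono hst

theorem finrank_span_row_image_of_card_le {A : Matrix m n K}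
    (hA : ∀ σ : n ↪ m, (A.submatrix σ id).det ≠ 0) (hnm : Fintype.card n ≤ Fintype.card m)
    {s : Finset m} (hs : s.card ≤ Fintype.card n) :
    finrank K (Submodule.span K (A.row '' s)) = s.card := by
  rw [Set.image_eq_range,
    finrank_span_eq_card (linearIndepOn_row_of_det_submatrix_ne_zero hA hnm hs)]
  simp

theorem finrank_span_row_image_eq_min {A : Matrix m n K}
    (hA : ∀ σ : n ↪ m, (A.submatrix σ id).det ≠ 0) (hnm : Fintype.card n ≤ Fintype.card m)
    (J : Finset m) : finrank K (Submodule.span K (A.row '' J)) = min (Fintype.card n) J.card := by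
  rcases le_total J.card (Fintype.card n) with hJ | hJ
  · rw [min_eq_right hJ, finrank_span_row_image_of_card_le hA hnm hJ]
  · rw [min_eq_left hJ]
    obtain ⟨S, hSJ, hS⟩ := Finset.exists_subset_card_eq hJ
    refine le_antisymm ?_ ?_
    · simpa using Submodule.finrank_le (Submodule.span K (A.row '' J))
    · calc Fintype.card n = finrank K (Submodule.span K (A.row '' S)) :=
            (hS ▸ finrank_span_row_image_of_card_le hA hnm hS.le).symm
        _ ≤ _ := Submodule.finrank_mono (Submodule.span_mono (Set.image_mono hSJ))

omit [DecidableEq n] in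
theorem rank_diagonal_indicator_mul [DecidableEq m] (A : Matrix m n K) (J : Finset m) :
    (diagonal (fun j => if j ∈ J then (1 : K) else 0) * A).rank
      = finrank K (Submodule.span K (A.row '' J)) := by
  have hrow : ∀ i, ((diagonal fun j => if j ∈ J then (1 : K) else 0) * A).row i
      = if i ∈ J then A.row i else 0 := fun i => by
    ext k; by_cases hi : i ∈ J <;> simp [hi, diagonal_mul]
  have hspan : Submodule.span K
      (Set.range ((diagonal fun j => if j ∈ J then (1 : K) else 0) * A).row)
        = Submodule.span K (A.row '' J) := by
    apply le_antisymm <;> rw [Submodule.span_le]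
    · rintro _ ⟨i, rfl⟩
      rw [hrow]
      split_ifs with hi
      · exact Submodule.subset_span ⟨i, hi, rfl⟩
      · exact zero_mem _
    · rintro _ ⟨i, hi, rfl⟩
      exact Submodule.subset_span ⟨i, by rw [hrow, if_pos (Finset.mem_coe.1 hi)]⟩
  rw [rank_eq_finrank_span_row, hspan]

end Rows

section AdjugateMinor

variable {K n d : Type*} [Field K] [Fintype n] [DecidableEq n] [Fintype d] [DecidableEq d]

theorem adjugate_eq_det_smul_inv {A : Matrix n n K} (hA : IsUnit A.det) :
    A.adjugate = A.det • A⁻¹ := by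
  rw [inv_def, smul_smul, Ring.mul_inverse_cancel _ hA, one_smul]

-- Without the ascription on `B.map C`, elaboration picks the `CStarMatrix` multiplication.
noncomputable def adjugateMinorPoly (B : Matrix n d K) (σ : d ↪ n) : MvPolynomial (n × n) K :=
  (((mvPolynomialX n n K).adjugate *
    (B.map C : Matrix n d (MvPolynomial (n × n) K))).submatrix σ id).det

theorem eval_adjugateMinorPoly (B : Matrix n d K) (σ : d ↪ n) (F : Matrix n n K) :
    eval (fun p => F p.1 p.2) (adjugateMinorPoly B σ) = ((F.adjugate * B).submatrix σ id).det := by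
  have hB : (B.map C).map (eval fun p : n × n => F p.1 p.2) = B := by ext; simp
  rw [adjugateMinorPoly, RingHom.map_det, RingHom.mapMatrix_apply, ← submatrix_map,
    Matrix.map_mul, hB, ← RingHom.mapMatrix_apply, RingHom.map_adjugate,
    mvPolynomialX_mapMatrix_eval]

theorem eval_adjugateMinorPoly_of_isUnit (B : Matrix n d K) (σ : d ↪ n) {F : Matrix n n K}
    (hF : IsUnit F.det) :
    eval (fun p => F p.1 p.2) (adjugateMinorPoly B σ)
      = F.det ^ Fintype.card d * ((F⁻¹ * B).submatrix σ id).det := by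
  rw [eval_adjugateMinorPoly, adjugate_eq_det_smul_inv hF, smul_mul, ← det_smul]
  rfl

theorem adjugateMinorPoly_ne_zero {B : Matrix n d K} (hB : LinearIndependent K B.col)
    (σ : d ↪ n) : adjugateMinorPoly B σ ≠ 0 := by
  obtain ⟨v, hv⟩ := hB.exists_basis_comp_embedding_eq (by simp) σ
  let F := (Pi.basisFun K n).toMatrix v
  have : Invertible F := (Pi.basisFun K n).invertibleToMatrix v
  have hF : IsUnit F.det := isUnit_det_of_invertible F
  have hFinv : F⁻¹ = v.toMatrix (Pi.basisFun K n) :=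
    inv_eq_left_inv (v.toMatrix_mul_toMatrix_flip _)
  have hB' : B = (Pi.basisFun K n).toMatrix B.col := by ext; simp [Basis.toMatrix_apply]
  have hminor : (F⁻¹ * B).submatrix σ id = 1 := by
    rw [hFinv, hB', Basis.toMatrix_mul_toMatrix, ← hv]
    ext i j
    simp [Basis.toMatrix_apply, Finsupp.single_apply, one_apply, eq_comm]
  intro h
  have := congrArg (eval fun p => F p.1 p.2) h
  rw [eval_adjugateMinorPoly_of_isUnit B σ hF, hminor, det_one, mul_one, map_zero] at this
  exact pow_ne_zero _ hF.ne_zero this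

omit [DecidableEq d] in
theorem finrank_map_toLin'_range_mulVecLin (M : Matrix n n K) (B : Matrix n d K) :
    finrank K ((LinearMap.range B.mulVecLin).map (toLin' M)) = (M * B).rank := by
  rw [toLin'_apply', ← LinearMap.range_comp, ← mulVecLin_mul]; rfl

end AdjugateMinor

end Matrix

theorem Submodule.range_mulVecLin_of_finBasis {K n : Type*} [Field K] [Fintype n]
    (C : Submodule K (n → K)) :
    LinearMap.range (Matrix.of fun i k => (finBasis K C k : n → K) i).mulVecLin = C := by
  have hcol : (Matrix.of fun i k => (finBasis K C k : n → K) i).col = C.subtype ∘ finBasis K C :=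
    rfl
  rw [range_mulVecLin, hcol, Set.range_comp, ← Submodule.map_span, Basis.span_eq,
    Submodule.map_subtype_top]

theorem Submodule.exists_ne_zero_finrank_map_diagonal_conj_eq_min {K n : Type*} [Field K]
    [Fintype n] [DecidableEq n] (C : Submodule K (n → K)) :
    ∃ P : MvPolynomial (n × n) K, P ≠ 0 ∧ ∀ F : Matrix n n K, IsUnit F.det →
      eval (fun p => F p.1 p.2) P ≠ 0 → ∀ J : Finset n,
        finrank K (C.map (toLin' (F * diagonal (fun j => if j ∈ J then 1 else 0) * F⁻¹)))
          = min (finrank K C) J.card := by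
  let B : Matrix n (Fin (finrank K C)) K := Matrix.of fun i k => (finBasis K C k : n → K) i
  have hB : LinearIndependent K B.col :=
    (finBasis K C).linearIndependent.map' C.subtype C.ker_subtype
  refine ⟨∏ σ, adjugateMinorPoly B σ,
    Finset.prod_ne_zero_iff.2 fun σ _ => adjugateMinorPoly_ne_zero hB σ, fun F hF hP J => ?_⟩
  have hminors : ∀ σ : Fin (finrank K C) ↪ n, ((F⁻¹ * B).submatrix σ id).det ≠ 0 := fun σ => by
    rw [map_prod, Finset.prod_ne_zero_iff] at hP
    have := hP σ (Finset.mem_univ σ)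
    rw [eval_adjugateMinorPoly_of_isUnit B σ hF] at this
    exact right_ne_zero_of_mul this
  have hdim : Fintype.card (Fin (finrank K C)) ≤ Fintype.card n := by
    simpa using Submodule.finrank_le C
  calc finrank K (C.map (toLin' (F * diagonal (fun j => if j ∈ J then 1 else 0) * F⁻¹)))
      = (F * diagonal (fun j => if j ∈ J then 1 else 0) * F⁻¹ * B).rank := by
        rw [← finrank_map_toLin'_range_mulVecLin, C.range_mulVecLin_of_finBasis]
    _ = (diagonal (fun j => if j ∈ J then (1 : K) else 0) * (F⁻¹ * B)).rank := by
        rw [Matrix.mul_assoc, Matrix.mul_assoc, rank_mul_eq_right_of_isUnit_det _ _ hF]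
    _ = min (finrank K C) J.card := by
        rw [rank_diagonal_indicator_mul, finrank_span_row_image_eq_min hminors hdim,
          Fintype.card_fin]

theorem generic_projections_of_subspaces_general (N m : ℕ)
    (C : Fin m → Submodule ℝ (Fin N → ℝ)) :
    ∃ G : MvPolynomial (Fin N × Fin N) ℝ, G ≠ 0 ∧
      ∀ F : Matrix (Fin N) (Fin N) ℝ,
        MvPolynomial.eval (fun p => F p.1 p.2) G ≠ 0 →
          IsUnit F ∧
          ∀ (J : Finset (Fin N)) (i : Fin m),
            Module.finrank ℝ (Submodule.map (projMap N F J) (C i)) =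
              min (Module.finrank ℝ (C i)) J.card := by
  choose P hP0 hP using fun i => (C i).exists_ne_zero_finrank_map_diagonal_conj_eq_min
  refine ⟨(mvPolynomialX (Fin N) (Fin N) ℝ).det * ∏ i, P i,
    mul_ne_zero (det_mvPolynomialX_ne_zero _ _) (Finset.prod_ne_zero_iff.2 fun i _ => hP0 i),
    fun F hF => ?_⟩
  rw [map_mul, map_prod, eval_det_mvPolynomialX] at hF
  obtain ⟨hdet, hprod⟩ := mul_ne_zero_iff.1 hF
  have hFdet : IsUnit F.det := Ne.isUnit hdet
  exact ⟨(isUnit_iff_isUnit_det F).2 hFdet,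
    fun J i => hP i F hFdet (Finset.prod_ne_zero_iff.1 hprod i (Finset.mem_univ i)) J⟩

/-- Given proper subspaces `C_1, …, C_m` of `ℝ^N`, there is a nonzero polynomial `G`
in the `N²` matrix entries such that `G(F) ≠ 0` implies `F` is invertible and
`dim π^F_J(C_i) = min(dim C_i, |J|)` for all `i` and all `J ⊆ [N]`. -/
theorem generic_projections_of_subspaces (N m : ℕ)
    (C : Fin m → Submodule ℝ (Fin N → ℝ)) (hC : ∀ i, C i ≠ ⊤) :
    ∃ G : MvPolynomial (Fin N × Fin N) ℝ, G ≠ 0 ∧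
      ∀ F : Matrix (Fin N) (Fin N) ℝ,
        MvPolynomial.eval (fun p => F p.1 p.2) G ≠ 0 →
          IsUnit F ∧
          ∀ (J : Finset (Fin N)) (i : Fin m),
            Module.finrank ℝ (Submodule.map (projMap N F J) (C i)) =
              min (Module.finrank ℝ (C i)) J.card :=
  generic_projections_of_subspaces_general N m C
end

section
/- Let V = ℝ^N, let 0 < r ≤ N, and let W be a linear subspace of ⋀^r V. For 1 ≤ m ≤ N-1 let t_m be the maximum of dim π^F_J(W) over all invertible N×N real matrices F and all subsets J of {1,…,N} of size m, where π^F_J also denotes the induced map ⋀^r V → ⋀^r V sending f_{k_1} ∧ … ∧ f_{k_r} to π^F_J(f_{k_1}) ∧ … ∧ π^F_J(f_{k_r}). Then there exists a nonzero real polynomial H in N² variables f_{ij} such that whenever H(F) ≠ 0, the matrix F is invertible and dim π^F_J(W) = t_m for every 1 ≤ m ≤ N-1 and every subset J of size m. -/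
/-- The image of a subspace `W` of the exterior algebra under the algebra map
induced by `π^F_J` (for `W ⊆ ⋀^r V`, this is the image under the induced map
`⋀^r V → ⋀^r V`). -/
noncomputable def projImage (N : ℕ) (F : Matrix (Fin N) (Fin N) ℝ) (J : Finset (Fin N))
    (W : Submodule ℝ (ExteriorAlgebra ℝ (Fin N → ℝ))) :
    Submodule ℝ (ExteriorAlgebra ℝ (Fin N → ℝ)) :=
  Submodule.map (ExteriorAlgebra.map (projMap N F J)).toLinearMap W

open MvPolynomial Module Submodule

variable {σ K E : Type*}

section PolynomialMap

variable [CommSemiring K] [AddCommMonoid E] [Module K E]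

def IsPolynomialMap (f : (σ → K) → E) : Prop :=
  ∃ (k : ℕ) (p : Fin k → MvPolynomial σ K) (u : Fin k → E), ∀ x, f x = ∑ j, eval x (p j) • u j

theorem isPolynomialMap_sum {ι : Type*} [Fintype ι] (p : ι → MvPolynomial σ K) (u : ι → E) :
    IsPolynomialMap fun x => ∑ i, eval x (p i) • u i :=
  let e := Fintype.equivFin ι
  ⟨_, p ∘ e.symm, u ∘ e.symm, fun _ => (e.symm.sum_comp _).symm⟩

theorem IsPolynomialMap.const (e : E) : IsPolynomialMap fun _ : σ → K => e := by
  simpa using isPolynomialMap_sum (fun _ : Unit => (1 : MvPolynomial σ K)) fun _ => e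

theorem IsPolynomialMap.add {f g : (σ → K) → E} (hf : IsPolynomialMap f)
    (hg : IsPolynomialMap g) : IsPolynomialMap fun x => f x + g x := by
  obtain ⟨k, p, u, hf⟩ := hf
  obtain ⟨l, q, v, hg⟩ := hg
  simpa [hf, hg, Fintype.sum_sum_type] using isPolynomialMap_sum (Sum.elim p q) (Sum.elim u v)

theorem IsPolynomialMap.mul {A : Type*} [Semiring A] [Algebra K A] {f g : (σ → K) → A}
    (hf : IsPolynomialMap f) (hg : IsPolynomialMap g) : IsPolynomialMap fun x => f x * g x := by
  obtain ⟨k, p, u, hf⟩ := hf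
  obtain ⟨l, q, v, hg⟩ := hg
  simpa only [hf, hg, Finset.sum_mul_sum, Fintype.sum_prod_type, map_mul, smul_mul_smul_comm]
    using isPolynomialMap_sum (fun j : Fin k × Fin l => p j.1 * q j.2) fun j => u j.1 * v j.2

end PolynomialMap

theorem isPolynomialMap_exteriorAlgebra_map [CommRing K] {n : Type*} [Fintype n] [DecidableEq n]
    (Q : Matrix n n (MvPolynomial σ K)) (w : ExteriorAlgebra K (n → K)) :
    IsPolynomialMap fun x => ExteriorAlgebra.map (Matrix.toLin' (Q.map (eval x))) w := by
  induction w using ExteriorAlgebra.induction with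
  | algebraMap c => simpa only [AlgHom.commutes] using IsPolynomialMap.const _
  | ι v =>
    have h x : ExteriorAlgebra.map (Matrix.toLin' (Q.map (eval x))) (ExteriorAlgebra.ι K v) =
        ∑ i, eval x (∑ j, Q i j * C (v j)) • ExteriorAlgebra.ι K (Pi.basisFun K n i) := by
      rw [ExteriorAlgebra.map_apply_ι, Matrix.toLin'_apply,
        ← (Pi.basisFun K n).sum_repr (Matrix.mulVec _ v)]
      simp [Matrix.mulVec, dotProduct]
    simpa only [h] using isPolynomialMap_sum _ _
  | mul a b ha hb => simpa only [map_mul] using ha.mul hb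
  | add a b ha hb => simpa only [map_add] using ha.add hb

section Rank

variable [Field K] [AddCommGroup E] [Module K E]

theorem exists_finrank_span_eq_rank {ι : Type*} [Fintype ι] (v : ι → (σ → K) → E)
    (hv : ∀ i, IsPolynomialMap (v i)) :
    ∃ (D : ℕ) (P : Matrix (Fin D) ι (MvPolynomial σ K)),
      ∀ x, finrank K (span K (Set.range fun i => v i x)) = (P.map (eval x)).rank := by
  choose k p u hu using hv
  set U : Submodule K E := span K (⋃ i, Set.range (u i))
  have : FiniteDimensional K U :=
    FiniteDimensional.span_of_finite _ (Set.finite_iUnion fun i => Set.finite_range _)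
  let b := Module.finBasis K U
  let uU i j : U := ⟨u i j, subset_span (Set.mem_iUnion.2 ⟨i, Set.mem_range_self _⟩)⟩
  -- the columns of `P` evaluated at `x` are the coordinates of the `v i x` in a basis of the
  -- span `U` of all coefficient vectors
  set P : Matrix _ ι (MvPolynomial σ K) := .of fun a i => ∑ j, p i j * C (b.repr (uU i j) a)
  refine ⟨_, P, fun x => ?_⟩
  have hvx : (fun i => v i x) = U.subtype ∘ b.equivFun.symm ∘ (P.map (eval x)).col := by
    ext i
    have hcol : b.equivFun.symm ((P.map (eval x)).col i) = ∑ j, eval x (p i j) • uU i j := by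
      apply b.equivFun.injective
      rw [LinearEquiv.apply_symm_apply]
      ext a
      simp [P]
    simp [hcol, hu, uU]
  rw [hvx, Set.range_comp, Set.range_comp, span_image, span_image_linearEquiv,
    finrank_map_subtype_eq, LinearEquiv.finrank_map_eq, Matrix.rank_eq_finrank_span_cols]

theorem exists_fin_linearIndependent_comp {ι V : Type*} [Finite ι] [AddCommGroup V] [Module K V]
    {t : ℕ} (v : ι → V) (ht : finrank K (span K (Set.range v)) = t) :
    ∃ c : Fin t → ι, LinearIndependent K (v ∘ c) := by
  obtain ⟨κ, a, ha, hspan, hli⟩ := exists_linearIndependent' K v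
  have : Finite κ := Finite.of_injective a ha
  let _ := Fintype.ofFinite κ
  have hcard : Fintype.card κ = t := by rw [← ht, ← hspan, finrank_span_eq_card hli]
  exact ⟨a ∘ (Fintype.equivFinOfCardEq hcard).symm, hli.comp _ (Equiv.injective _)⟩

theorem Matrix.exists_submatrix_det_ne_zero {m n : Type*} [Fintype m] [Fintype n]
    (M : Matrix m n K) :
    ∃ (r : Fin M.rank → m) (c : Fin M.rank → n), (M.submatrix r c).det ≠ 0 := by
  obtain ⟨c, hc⟩ := exists_fin_linearIndependent_comp M.col M.rank_eq_finrank_span_cols.symm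
  have hrank : (M.submatrix id c).rank = M.rank := by
    rw [rank_eq_finrank_span_cols]
    exact (finrank_span_eq_card hc).trans (Fintype.card_fin _)
  obtain ⟨r, hr⟩ := exists_fin_linearIndependent_comp (M.submatrix id c).row
    (by rw [← rank_eq_finrank_span_row, hrank])
  exact ⟨r, c, ((isUnit_iff_isUnit_det _).mp (linearIndependent_rows_iff_isUnit.mp hr)).ne_zero⟩

theorem exists_ne_zero_finrank_span_le {ι : Type*} [Fintype ι] (v : ι → (σ → K) → E)
    (hv : ∀ i, IsPolynomialMap (v i)) (x₀ : σ → K) :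
    ∃ q : MvPolynomial σ K, q ≠ 0 ∧ ∀ x, eval x q ≠ 0 →
      finrank K (span K (Set.range fun i => v i x₀)) ≤
        finrank K (span K (Set.range fun i => v i x)) := by
  obtain ⟨D, P, hP⟩ := exists_finrank_span_eq_rank v hv
  obtain ⟨r, c, hdet⟩ := (P.map (eval x₀)).exists_submatrix_det_ne_zero
  have heval x : eval x (P.submatrix r c).det = ((P.map (eval x)).submatrix r c).det := by
    rw [RingHom.map_det]; rfl
  refine ⟨(P.submatrix r c).det, fun h => hdet (by rw [← heval, h, map_zero]), fun x hx => ?_⟩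
  rw [heval] at hx
  calc finrank K (span K (Set.range fun i => v i x₀))
      = ((P.map (eval x)).submatrix r c).rank := by
        rw [Matrix.rank_of_isUnit _ ((Matrix.isUnit_iff_isUnit_det _).mpr hx.isUnit),
          Fintype.card_fin, hP]
    _ ≤ _ := (hP x).symm ▸ Matrix.rank_submatrix_le _ _ _

theorem exists_ne_zero_finrank_map_le {M : Type*} [AddCommGroup M] [Module K M]
    (W : Submodule K M) [FiniteDimensional K W] (L : (σ → K) → M →ₗ[K] E)
    (hL : ∀ w, IsPolynomialMap fun x => L x w) (x₀ : σ → K) :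
    ∃ q : MvPolynomial σ K, q ≠ 0 ∧ ∀ x, eval x q ≠ 0 →
      finrank K (W.map (L x₀)) ≤ finrank K (W.map (L x)) := by
  let b := Module.finBasis K W
  have hspan : span K (Set.range fun i => (b i : M)) = W := by
    rw [show (fun i => (b i : M)) = W.subtype ∘ b from rfl, Set.range_comp, span_image, b.span_eq,
      map_subtype_top]
  have hW x : W.map (L x) = span K (Set.range fun i => L x (b i)) := by
    conv_lhs => rw [← hspan]
    rw [map_span, ← Set.range_comp]
    rfl
  obtain ⟨q, hq0, hq⟩ := exists_ne_zero_finrank_span_le (fun i x => L x (b i)) (fun i => hL _) x₀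
  exact ⟨q, hq0, fun x hx => by rw [hW, hW]; exact hq x hx⟩

end Rank

theorem ExteriorAlgebra.map_smul_apply_of_mem_exteriorPower {R M N : Type*} [CommRing R]
    [AddCommGroup M] [Module R M] [AddCommGroup N] [Module R N] (c : R) (φ : M →ₗ[R] N) {n : ℕ}
    {x : ExteriorAlgebra R M} (hx : x ∈ ⋀[R]^n M) :
    ExteriorAlgebra.map (c • φ) x = c ^ n • ExteriorAlgebra.map φ x := by
  induction hx using Submodule.pow_induction_on_left' with
  | algebraMap r => simp
  | add x y i hx hy ihx ihy => rw [map_add, map_add, ihx, ihy, smul_add]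
  | mem_mul m hm i x hx ih =>
    obtain ⟨v, rfl⟩ := hm
    rw [map_mul, map_mul, ExteriorAlgebra.map_apply_ι, ExteriorAlgebra.map_apply_ι, ih,
      LinearMap.smul_apply, map_smul, smul_mul_smul_comm, ← pow_succ']

theorem Submodule.map_exteriorAlgebra_map_smul {M N : Type*} [Field K] [AddCommGroup M]
    [Module K M] [AddCommGroup N] [Module K N] {r : ℕ} {W : Submodule K (ExteriorAlgebra K M)}
    (hW : W ≤ ⋀[K]^r M) {c : K} (hc : c ≠ 0) (φ : M →ₗ[K] N) :
    W.map (ExteriorAlgebra.map (c • φ)).toLinearMap =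
      W.map (ExteriorAlgebra.map φ).toLinearMap := by
  calc W.map (ExteriorAlgebra.map (c • φ)).toLinearMap
      = W.map (c ^ r • (ExteriorAlgebra.map φ).toLinearMap) := by
        refine SetLike.coe_injective ?_
        simp only [map_coe]
        exact Set.image_congr fun x hx =>
          ExteriorAlgebra.map_smul_apply_of_mem_exteriorPower c φ (hW hx)
    _ = _ := Submodule.map_smul _ _ _ (pow_ne_zero r hc)

theorem Matrix.map_eval_mvPolynomialX_mul_mul_adjugate {n R : Type*} [Fintype n] [DecidableEq n]
    [CommRing R] (D F : Matrix n n R) :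
    (mvPolynomialX n n R * D.map C * (mvPolynomialX n n R).adjugate).map
      (eval fun p : n × n => F p.1 p.2) = F * D * F.adjugate := by
  have hD : (D.map (C : R →+* MvPolynomial (n × n) R)).map (eval fun p : n × n => F p.1 p.2) =
      D := by
    ext; simp
  rw [Matrix.map_mul, Matrix.map_mul, hD]
  change (eval _).mapMatrix _ * D * (eval _).mapMatrix _ = _
  rw [RingHom.map_adjugate, mvPolynomialX_mapMatrix_eval]

/-- `sSup (projImageFinranks N W m)` is the `t_m` of the statement. -/
def projImageFinranks (N : ℕ) (W : Submodule ℝ (ExteriorAlgebra ℝ (Fin N → ℝ))) (m : ℕ) : Set ℕ :=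
  {t : ℕ | ∃ (F' : Matrix (Fin N) (Fin N) ℝ) (J' : Finset (Fin N)),
    IsUnit F' ∧ J'.card = m ∧ t = Module.finrank ℝ (projImage N F' J' W)}

section Projection

variable {N : ℕ}

theorem projMap_submatrix_perm (F : Matrix (Fin N) (Fin N) ℝ) {σ : Equiv.Perm (Fin N)}
    {J J₀ : Finset (Fin N)} (hJ : J.map σ.toEmbedding = J₀) :
    projMap N (F.submatrix id σ) J = projMap N F J₀ := by
  have hD : Matrix.diagonal (fun j => if j ∈ J then (1 : ℝ) else 0) =
      (Matrix.diagonal fun j => if j ∈ J₀ then (1 : ℝ) else 0).submatrix σ σ := by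
    simp [Matrix.submatrix_diagonal_equiv, ← hJ]
  rw [projMap, projMap, hD, show F.submatrix id σ = F.submatrix (Equiv.refl _) σ from rfl,
    Matrix.inv_submatrix_equiv, Matrix.submatrix_mul_equiv, Matrix.submatrix_mul_equiv]
  rfl

theorem projImage_eq_map_adjugate {r : ℕ} {W : Submodule ℝ (ExteriorAlgebra ℝ (Fin N → ℝ))}
    (hW : W ≤ ⋀[ℝ]^r (Fin N → ℝ)) {F : Matrix (Fin N) (Fin N) ℝ} (hF : IsUnit F)
    (J : Finset (Fin N)) :
    projImage N F J W = W.map (ExteriorAlgebra.map (Matrix.toLin'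
      (F * Matrix.diagonal (fun j => if j ∈ J then (1 : ℝ) else 0) * F.adjugate))).toLinearMap := by
  have hdet : F.det ≠ 0 := ((Matrix.isUnit_iff_isUnit_det F).mp hF).ne_zero
  rw [projImage, projMap, Matrix.inv_def, Ring.inverse_eq_inv, Matrix.mul_smul, map_smul,
    Submodule.map_exteriorAlgebra_map_smul hW (inv_ne_zero hdet)]

variable {W : Submodule ℝ (ExteriorAlgebra ℝ (Fin N → ℝ))} [FiniteDimensional ℝ W]

theorem bddAbove_projImageFinranks (m : ℕ) : BddAbove (projImageFinranks N W m) :=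
  ⟨finrank ℝ W, by rintro _ ⟨F, J, -, -, rfl⟩; exact finrank_map_le _ _⟩

theorem finrank_projImage_le_sSup {F : Matrix (Fin N) (Fin N) ℝ} (hF : IsUnit F)
    (J : Finset (Fin N)) : finrank ℝ (projImage N F J W) ≤ sSup (projImageFinranks N W J.card) :=
  le_csSup (bddAbove_projImageFinranks _) ⟨F, J, hF, rfl, rfl⟩

theorem exists_finrank_projImage_eq_sSup (J : Finset (Fin N)) :
    ∃ F, IsUnit F ∧ finrank ℝ (projImage N F J W) = sSup (projImageFinranks N W J.card) := by
  obtain ⟨F₀, J₀, hF₀, hcard, hmax⟩ :=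
    Nat.sSup_mem (s := projImageFinranks N W J.card) ⟨_, 1, J, isUnit_one, rfl, rfl⟩
      (bddAbove_projImageFinranks J.card)
  obtain ⟨σ, hσ⟩ := Equiv.Perm.exists_map_finset_eq J J₀ hcard.symm
  refine ⟨F₀.submatrix id σ, (Matrix.isUnit_submatrix_equiv (Equiv.refl _) σ).mpr hF₀, ?_⟩
  rw [projImage, projMap_submatrix_perm F₀ hσ, hmax]
  rfl

theorem exists_ne_zero_finrank_projImage_eq_sSup {r : ℕ} (hW : W ≤ ⋀[ℝ]^r (Fin N → ℝ))
    (J : Finset (Fin N)) :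
    ∃ q : MvPolynomial (Fin N × Fin N) ℝ, q ≠ 0 ∧ ∀ F : Matrix (Fin N) (Fin N) ℝ, IsUnit F →
      eval (fun p => F p.1 p.2) q ≠ 0 →
        finrank ℝ (projImage N F J W) = sSup (projImageFinranks N W J.card) := by
  set Q := Matrix.mvPolynomialX (Fin N) (Fin N) ℝ *
    (Matrix.diagonal fun j => if j ∈ J then (1 : ℝ) else 0).map C *
    (Matrix.mvPolynomialX (Fin N) (Fin N) ℝ).adjugate
  have hproj F (hF : IsUnit F) : projImage N F J W =
      W.map (ExteriorAlgebra.map (Matrix.toLin' (Q.map (eval fun p => F p.1 p.2)))).toLinearMap :=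
    by
    rw [projImage_eq_map_adjugate hW hF, Matrix.map_eval_mvPolynomialX_mul_mul_adjugate]
  obtain ⟨F₀, hF₀, hmax⟩ := exists_finrank_projImage_eq_sSup (W := W) J
  obtain ⟨q, hq0, hq⟩ := exists_ne_zero_finrank_map_le W
    (fun x => (ExteriorAlgebra.map (Matrix.toLin' (Q.map (eval x)))).toLinearMap)
    (isPolynomialMap_exteriorAlgebra_map Q) fun p => F₀ p.1 p.2
  refine ⟨q, hq0, fun F hF hqF => (finrank_projImage_le_sSup hF J).antisymm ?_⟩
  rw [← hmax, hproj F₀ hF₀, hproj F hF]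
  exact hq _ hqF

end Projection

theorem generic_projections_of_exterior_subspace_general (N r : ℕ)
    (W : Submodule ℝ (ExteriorAlgebra ℝ (Fin N → ℝ)))
    (hWle : W ≤ ⋀[ℝ]^r (Fin N → ℝ)) :
    ∃ H : MvPolynomial (Fin N × Fin N) ℝ, H ≠ 0 ∧
      ∀ F : Matrix (Fin N) (Fin N) ℝ,
        MvPolynomial.eval (fun p => F p.1 p.2) H ≠ 0 →
          IsUnit F ∧
          ∀ m : ℕ, 1 ≤ m → m ≤ N - 1 →
            ∀ J : Finset (Fin N), J.card = m →
              Module.finrank ℝ (projImage N F J W) =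
                sSup {t : ℕ | ∃ (F' : Matrix (Fin N) (Fin N) ℝ) (J' : Finset (Fin N)),
                  IsUnit F' ∧ J'.card = m ∧
                  t = Module.finrank ℝ (projImage N F' J' W)} := by
  have : FiniteDimensional ℝ W := Submodule.finiteDimensional_of_le hWle
  choose q hq0 hq using exists_ne_zero_finrank_projImage_eq_sSup hWle
  refine ⟨(Matrix.mvPolynomialX (Fin N) (Fin N) ℝ).det * ∏ J, q J,
    mul_ne_zero (Matrix.det_mvPolynomialX_ne_zero _ _)
      (Finset.prod_ne_zero_iff.mpr fun J _ => hq0 J),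
    fun F hF => ?_⟩
  rw [map_mul, map_prod, mul_ne_zero_iff, Finset.prod_ne_zero_iff,
    Matrix.eval_det_mvPolynomialX] at hF
  have hunit : IsUnit F := (Matrix.isUnit_iff_isUnit_det F).mpr hF.1.isUnit
  exact ⟨hunit, fun m _ _ J hJ => hJ ▸ hq J F hunit (hF.2 J (Finset.mem_univ J))⟩

/-- For a subspace `W ⊆ ⋀^r ℝ^N`, there is a nonzero polynomial `H` in the `N²` matrix
entries such that `H(F) ≠ 0` implies `F` is invertible and, for each `1 ≤ m ≤ N - 1`
and each `J` of size `m`, `dim π^F_J(W)` equals the maximum `t_m` of `dim π^{F'}_{J'}(W)`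
over all invertible `F'` and all `J'` of size `m`. -/
theorem generic_projections_of_exterior_subspace (N r : ℕ) (hr : 0 < r) (hrN : r ≤ N)
    (W : Submodule ℝ (ExteriorAlgebra ℝ (Fin N → ℝ)))
    (hWle : W ≤ ⋀[ℝ]^r (Fin N → ℝ)) :
    ∃ H : MvPolynomial (Fin N × Fin N) ℝ, H ≠ 0 ∧
      ∀ F : Matrix (Fin N) (Fin N) ℝ,
        MvPolynomial.eval (fun p => F p.1 p.2) H ≠ 0 →
          IsUnit F ∧
          ∀ m : ℕ, 1 ≤ m → m ≤ N - 1 →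
            ∀ J : Finset (Fin N), J.card = m →
              Module.finrank ℝ (projImage N F J W) =
                sSup {t : ℕ | ∃ (F' : Matrix (Fin N) (Fin N) ℝ) (J' : Finset (Fin N)),
                  IsUnit F' ∧ J'.card = m ∧
                  t = Module.finrank ℝ (projImage N F' J' W)} :=
  generic_projections_of_exterior_subspace_general N r W hWle
end

section
/- Fix non-negative integers a, b, n with a ≤ b ≤ n. Let 𝒜 be a family of a-element subsets of {1,…,n}. Then there exists a b-element subset B of {1,…,n} such that |{A ∈ 𝒜 : A ⊆ B}| / C(b, a) ≥ |𝒜| / C(n, a). -/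
/-!
Double count the pairs `(A, B)` with `A ∈ 𝒜`, `#B = b` and `A ⊆ B`: every `A` lies in
`C(n - a, b - a)` sets `B`, so on average a `b`-set contains `#𝒜 * C(n - a, b - a) / C(n, b)`
members of `𝒜`. Some `B` does at least as well as the average, and the identity
`C(n, b) * C(b, a) = C(n, a) * C(n - a, b - a)` turns this into the density inequality.
-/

open Finset

variable {α : Type*} [Fintype α] [DecidableEq α] {𝒜 : Finset (Finset α)} {a b : ℕ}

theorem Finset.sum_card_filter_subset_powersetCard (h𝒜 : (𝒜 : Set (Finset α)).Sized a)
    (hab : a ≤ b) :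
    ∑ B ∈ powersetCard b univ, #{A ∈ 𝒜 | A ⊆ B} =
      #𝒜 * (Fintype.card α - a).choose (b - a) := by
  calc ∑ B ∈ powersetCard b univ, #{A ∈ 𝒜 | A ⊆ B}
      = ∑ B ∈ powersetCard b univ, #(𝒜.bipartiteBelow (· ⊆ ·) B) := rfl
    _ = ∑ A ∈ 𝒜, #((powersetCard b univ).bipartiteAbove (· ⊆ ·) A) :=
        (sum_card_bipartiteAbove_eq_sum_card_bipartiteBelow _).symm
    _ = ∑ _A ∈ 𝒜, (Fintype.card α - a).choose (b - a) := sum_congr rfl fun A hA => by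
        have hA : #A = a := h𝒜 hA
        rw [bipartiteAbove, card_filter_powersetCard_subset A univ b (subset_univ A) (hA ▸ hab),
          card_univ, hA]
    _ = #𝒜 * (Fintype.card α - a).choose (b - a) := by rw [sum_const, smul_eq_mul]

theorem Finset.exists_card_mul_choose_le_choose_mul_card_filter_subset
    (h𝒜 : (𝒜 : Set (Finset α)).Sized a) (hab : a ≤ b) (hb : b ≤ Fintype.card α) :
    ∃ B : Finset α, #B = b ∧
      #𝒜 * (Fintype.card α - a).choose (b - a) ≤
        (Fintype.card α).choose b * #{A ∈ 𝒜 | A ⊆ B} := by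
  have hne : (powersetCard b (univ : Finset α)).Nonempty := powersetCard_nonempty.2 hb
  obtain ⟨B, hB, hle⟩ := exists_le_of_sum_le hne
    (f := fun _ => #𝒜 * (Fintype.card α - a).choose (b - a))
    (g := fun B => (Fintype.card α).choose b * #{A ∈ 𝒜 | A ⊆ B}) <| by
      rw [sum_const, ← mul_sum, sum_card_filter_subset_powersetCard h𝒜 hab, card_powersetCard,
        card_univ, smul_eq_mul, mul_comm]
  exact ⟨B, (mem_powersetCard.1 hB).2, hle⟩

theorem Finset.exists_card_eq_density_le_density_filter_subset
    (h𝒜 : (𝒜 : Set (Finset α)).Sized a) (hab : a ≤ b) (hb : b ≤ Fintype.card α) :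
    ∃ B : Finset α, #B = b ∧
      (#𝒜 : ℝ) / (Fintype.card α).choose a ≤ #{A ∈ 𝒜 | A ⊆ B} / b.choose a := by
  set n := Fintype.card α
  obtain ⟨B, hBcard, hle⟩ :=
    exists_card_mul_choose_le_choose_mul_card_filter_subset h𝒜 hab hb
  refine ⟨B, hBcard, ?_⟩
  rw [div_le_div_iff₀ (mod_cast Nat.choose_pos (hab.trans hb))
    (mod_cast Nat.choose_pos hab)]
  suffices
      #𝒜 * b.choose a * n.choose b ≤ #{A ∈ 𝒜 | A ⊆ B} * n.choose a * n.choose b from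
    mod_cast Nat.le_of_mul_le_mul_right this (Nat.choose_pos hb)
  calc #𝒜 * b.choose a * n.choose b
      = n.choose a * (#𝒜 * (n - a).choose (b - a)) := by
        rw [mul_assoc, mul_comm (b.choose a), Nat.choose_mul hab]; ring
    _ ≤ n.choose a * (n.choose b * #{A ∈ 𝒜 | A ⊆ B}) := Nat.mul_le_mul_left _ hle
    _ = #{A ∈ 𝒜 | A ⊆ B} * n.choose a * n.choose b := by ring

/-- Any `a`-uniform hypergraph on `[n]` has a restriction to some `b`-element set
whose density is at least the density of the original hypergraph. -/
theorem exists_dense_restriction (n a b : ℕ) (hab : a ≤ b) (hbn : b ≤ n)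
    (𝒜 : Finset (Finset (Fin n))) (h𝒜 : ∀ A ∈ 𝒜, A.card = a) :
    ∃ B : Finset (Fin n), B.card = b ∧
      (((𝒜.filter (fun A => A ⊆ B)).card : ℝ) / (b.choose a) ≥
        (𝒜.card : ℝ) / (n.choose a)) := by
  obtain ⟨B, hB, hdense⟩ := exists_card_eq_density_le_density_filter_subset (α := Fin n)
    (fun A hA => h𝒜 A hA) hab (by rwa [Fintype.card_fin])
  rw [Fintype.card_fin] at hdense
  exact ⟨B, hB, hdense⟩
end

section
/- Let (A_1, B_1), …, (A_m, B_m) be pairs of finite sets with |A_i| = a and |B_i| = b for every i. Suppose: (i) A_i ∩ B_i = ∅ for 1 ≤ i ≤ m; and (ii) A_i ∩ B_j ≠ ∅ for all i ≠ j. Then m ≤ C(a+b, a). -/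
/-!
Bollobás's induction on the ground set `X` proves the non-uniform inequality
`∑ i, 1 / C(|A i| + |B i|, |A i|) ≤ 1`, from which the uniform bound is immediate. For `x ∈ X`,
the pairs `(A i, B i \ {x})` with `x ∉ A i` again form such a family on `X \ {x}`. Summing
these inductive bounds over `x ∈ X` counts the weight of every pair exactly `|X|` times, because
`b / C(a + b - 1, a) = (a + b) / C(a + b, a)` when `b ≥ 1`.
-/

open Finset

namespace Bollobas

lemma add_one_mul_inv_choose_eq (a b : ℕ) :
    ((b + 1 : ℕ) : ℚ) * ((a + b).choose a : ℚ)⁻¹ =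
      ((a + (b + 1) : ℕ) : ℚ) * ((a + (b + 1)).choose a : ℚ)⁻¹ := by
  have key := Nat.choose_mul_succ_eq (a + b) a
  rw [show a + b + 1 - a = b + 1 by omega, add_assoc] at key
  have h₁ : ((a + b).choose a : ℚ) ≠ 0 := by exact_mod_cast (Nat.choose_pos (by omega)).ne'
  have h₂ : ((a + (b + 1)).choose a : ℚ) ≠ 0 := by exact_mod_cast (Nat.choose_pos (by omega)).ne'
  rw [← div_eq_mul_inv, ← div_eq_mul_inv, div_eq_div_iff h₁ h₂]
  exact_mod_cast (by linarith : (b + 1) * (a + (b + 1)).choose a = (a + (b + 1)) * (a + b).choose a)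

variable {ι α : Type*}

lemma sum_inv_choose_le_one_of_eq_empty {s : Finset ι} {A B : ι → Finset α}
    (hcross : ∀ i ∈ s, ∀ j ∈ s, i ≠ j → ¬Disjoint (A i) (B j)) {i : ι} (hi : i ∈ s)
    (hBi : B i = ∅) :
    ∑ j ∈ s, ((#(A j) + #(B j)).choose #(A j) : ℚ)⁻¹ ≤ 1 := by
  have hsi : s ⊆ {i} := fun j hj => by
    by_contra hji
    exact hcross j hj i hi (by simpa using hji) (by simp [hBi])
  calc ∑ j ∈ s, ((#(A j) + #(B j)).choose #(A j) : ℚ)⁻¹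
      ≤ ∑ j ∈ {i}, ((#(A j) + #(B j)).choose #(A j) : ℚ)⁻¹ :=
        sum_le_sum_of_subset_of_nonneg hsi fun _ _ _ => by positivity
    _ = 1 := by simp [hBi]

variable [DecidableEq α]

lemma sum_sdiff_inv_choose_card_erase {X A B : Finset α} (hAX : A ⊆ X) (hBX : B ⊆ X)
    (hAB : Disjoint A B) (hB : B.Nonempty) :
    ∑ x ∈ X \ A, ((#A + #(B.erase x)).choose #A : ℚ)⁻¹ =
      #X * ((#A + #B).choose #A : ℚ)⁻¹ := by
  obtain ⟨b, hb⟩ : ∃ b, #B = b + 1 := Nat.exists_eq_add_one.mpr hB.card_pos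
  have hsplit : X \ A = X \ (A ∪ B) ∪ B := by
    ext x
    have := @hBX x
    have := @disjoint_left.mp hAB x
    simp only [mem_sdiff, mem_union]
    tauto
  have hout : ∑ x ∈ X \ (A ∪ B), ((#A + #(B.erase x)).choose #A : ℚ)⁻¹ =
      #(X \ (A ∪ B)) * ((#A + #B).choose #A : ℚ)⁻¹ := by
    rw [← nsmul_eq_mul, ← sum_const]
    exact sum_congr rfl fun x hx => by
      rw [erase_eq_of_notMem fun h => (mem_sdiff.mp hx).2 (mem_union_right A h)]
  have hin : ∑ x ∈ B, ((#A + #(B.erase x)).choose #A : ℚ)⁻¹ =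
      #B * ((#A + (#B - 1)).choose #A : ℚ)⁻¹ := by
    rw [← nsmul_eq_mul, ← sum_const]
    exact sum_congr rfl fun x hx => by rw [card_erase_of_mem hx]
  have hcard : #(X \ (A ∪ B)) + (#A + #B) = #X := by
    rw [card_sdiff_of_subset (union_subset hAX hBX), ← card_union_of_disjoint hAB,
      Nat.sub_add_cancel (card_le_card (union_subset hAX hBX))]
  rw [hsplit, sum_union (sdiff_disjoint.mono_right subset_union_right), hout, hin, hb,
    Nat.add_sub_cancel, add_one_mul_inv_choose_eq, ← hcard, hb]
  push_cast
  ring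

theorem sum_inv_choose_le_one {s : Finset ι} {A B : ι → Finset α} (X : Finset α)
    (hAX : ∀ i ∈ s, A i ⊆ X) (hBX : ∀ i ∈ s, B i ⊆ X)
    (hdisj : ∀ i ∈ s, Disjoint (A i) (B i))
    (hcross : ∀ i ∈ s, ∀ j ∈ s, i ≠ j → ¬Disjoint (A i) (B j)) :
    ∑ i ∈ s, ((#(A i) + #(B i)).choose #(A i) : ℚ)⁻¹ ≤ 1 := by
  induction X using Finset.strongInduction generalizing s B with
  | H X ih =>
  by_cases hBne : ∀ i ∈ s, (B i).Nonempty
  swap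
  · push Not at hBne
    obtain ⟨i, hi, hBi⟩ := hBne
    exact sum_inv_choose_le_one_of_eq_empty hcross hi hBi
  rcases s.eq_empty_or_nonempty with rfl | ⟨i₀, hi₀⟩
  · simp
  have hX : (0 : ℚ) < #X := by
    exact_mod_cast card_pos.mpr ((hBne i₀ hi₀).mono (hBX i₀ hi₀))
  have hrestrict : ∀ x ∈ X, ∑ i ∈ s with x ∉ A i,
      ((#(A i) + #((B i).erase x)).choose #(A i) : ℚ)⁻¹ ≤ 1 := by
    intro x hx
    refine ih (X.erase x) (erase_ssubset hx) (s := {i ∈ s | x ∉ A i})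
      (B := fun i => (B i).erase x)
      (fun i hi => ?_) (fun i hi => ?_) (fun i hi => ?_) (fun i hi j hj hij => ?_)
    all_goals simp only [mem_filter] at hi
    · exact subset_erase.mpr ⟨hAX i hi.1, hi.2⟩
    · exact erase_subset_erase x (hBX i hi.1)
    · exact (hdisj i hi.1).mono_right (erase_subset _ _)
    · rw [← disjoint_erase_comm, erase_eq_of_notMem hi.2]
      exact hcross i hi.1 j (mem_filter.mp hj).1 hij
  refine le_of_mul_le_mul_left ?_ hX
  calc (#X : ℚ) * ∑ i ∈ s, ((#(A i) + #(B i)).choose #(A i) : ℚ)⁻¹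
      = ∑ i ∈ s, ∑ x ∈ X \ A i, ((#(A i) + #((B i).erase x)).choose #(A i) : ℚ)⁻¹ := by
        rw [mul_sum]
        exact sum_congr rfl fun i hi => (sum_sdiff_inv_choose_card_erase (hAX i hi) (hBX i hi)
          (hdisj i hi) (hBne i hi)).symm
    _ = ∑ x ∈ X, ∑ i ∈ s with x ∉ A i, ((#(A i) + #((B i).erase x)).choose #(A i) : ℚ)⁻¹ :=
        sum_comm' fun i x => by simp only [mem_sdiff, mem_filter]; tauto
    _ ≤ ∑ x ∈ X, 1 := sum_le_sum hrestrict
    _ = #X * 1 := by simp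

end Bollobas

/-- The uniform Bollobás Two Families Theorem. -/
theorem uniform_two_families (m a b : ℕ) (A B : Fin m → Finset ℕ)
    (hA : ∀ i, (A i).card = a) (hB : ∀ i, (B i).card = b)
    (hdisj : ∀ i, A i ∩ B i = ∅)
    (hcross : ∀ i j, i ≠ j → A i ∩ B j ≠ ∅) :
    m ≤ (a + b).choose a := by
  have h := Bollobas.sum_inv_choose_le_one (s := univ) (univ.biUnion fun i => A i ∪ B i)
    (fun i _ => subset_union_left.trans (subset_biUnion_of_mem (fun i => A i ∪ B i) (mem_univ i)))
    (fun i _ => subset_union_right.trans (subset_biUnion_of_mem (fun i => A i ∪ B i) (mem_univ i)))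
    (fun i _ => disjoint_iff_inter_eq_empty.mpr (hdisj i))
    (fun i _ j _ hij => by rw [disjoint_iff_inter_eq_empty]; exact hcross i j hij)
  simp only [hA, hB, sum_const, card_univ, Fintype.card_fin, nsmul_eq_mul] at h
  have hC : (0 : ℚ) < (a + b).choose a := by exact_mod_cast Nat.choose_pos (by omega)
  rw [← div_eq_mul_inv, div_le_one hC] at h
  exact_mod_cast h
end

section
/- Let (A_1, B_1), …, (A_m, B_m) be pairs of finite sets, and write a_i = |A_i|, b_i = |B_i|. Suppose: (i) A_i ∩ B_i = ∅ for 1 ≤ i ≤ m; and (ii) A_i ∩ B_j ≠ ∅ for all i ≠ j. Then Σ_{i=1}^m 1 / C(a_i + b_i, a_i) ≤ 1. -/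
/-!
Induction on the ground set `U`. Deleting a point `x ∈ U` from every `B i` with `x ∉ A i`,
and discarding the pairs with `x ∈ A i`, leaves a system on `U \ {x}`, whose weights sum to at
most `1`. Summing these `#U` inequalities over `x`, the pair `(A i, B i)` contributes
`∑_{x ∈ U \ A i} 1 / C(a + b - [x ∈ B i], a)`, which is exactly `#U / C(a + b, a)` by the
identity `b / C(a + b - 1, a) = (a + b) / C(a + b, a)`.
-/

open Finset

variable {α ι : Type*}

structure IsBollobasSystem (A B : ι → Finset α) : Prop where
  disjoint_self : ∀ i, Disjoint (A i) (B i)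
  not_disjoint : ∀ i j, i ≠ j → ¬Disjoint (A i) (B j)

noncomputable def pairWeight (s t : Finset α) : ℝ := 1 / (#s + #t).choose #s

lemma pairWeight_empty_right (s : Finset α) : pairWeight s ∅ = 1 := by
  simp [pairWeight]

lemma card_mul_pairWeight_erase [DecidableEq α] (s : Finset α) {t : Finset α} {x : α}
    (hx : x ∈ t) : #t * pairWeight s (t.erase x) = (#s + #t) * pairWeight s t := by
  obtain ⟨b, hb⟩ : ∃ b, #t = b + 1 := Nat.exists_eq_succ_of_ne_zero (card_ne_zero_of_mem hx)
  have hchoose := Nat.choose_mul_succ_eq (#s + b) #s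
  rw [show #s + b + 1 - #s = b + 1 by omega] at hchoose
  have hpos₁ : (0 : ℝ) < (#s + b).choose #s := by exact_mod_cast Nat.choose_pos (by omega)
  have hpos₂ : (0 : ℝ) < (#s + b + 1).choose #s := by exact_mod_cast Nat.choose_pos (by omega)
  simp only [pairWeight, card_erase_of_mem hx, hb, Nat.add_sub_cancel, ← add_assoc]
  field_simp
  rw [← Nat.cast_add, ← add_assoc]
  exact_mod_cast (mul_comm _ _).trans hchoose.symm

lemma sum_pairWeight_erase [DecidableEq α] {s t U : Finset α} (hst : Disjoint s t)
    (hU : s ∪ t ⊆ U) (ht : t.Nonempty) :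
    ∑ x ∈ U \ s, pairWeight s (t.erase x) = #U * pairWeight s t := by
  have htU : t ⊆ U \ s := fun x hx ↦
    mem_sdiff.2 ⟨hU (mem_union_right _ hx), disjoint_right.1 hst hx⟩
  have h_out :
      ∑ x ∈ (U \ s) \ t, pairWeight s (t.erase x) = #((U \ s) \ t) * pairWeight s t := by
    rw [← nsmul_eq_mul, ← sum_const]
    exact sum_congr rfl fun x hx ↦ by rw [erase_eq_of_notMem (mem_sdiff.1 hx).2]
  have h_in : ∑ x ∈ t, pairWeight s (t.erase x) = (#s + #t) * pairWeight s t := by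
    have hcard : (#t : ℝ) ≠ 0 := by exact_mod_cast ht.card_ne_zero
    rw [← mul_right_inj' hcard, mul_sum, ← nsmul_eq_mul, ← sum_const]
    exact sum_congr rfl fun x hx ↦ card_mul_pairWeight_erase s hx
  have hcard : #((U \ s) \ t) + #t + #s = #U := by
    rw [card_sdiff_add_card_eq_card htU, card_sdiff_add_card_eq_card (subset_union_left.trans hU)]
  rw [← sum_sdiff htU, h_out, h_in, ← hcard]
  push_cast
  ring

namespace IsBollobasSystem

variable {A B : ι → Finset α}

lemma eq_of_eq_empty (h : IsBollobasSystem A B) {i : ι} (hi : B i = ∅) (j : ι) : j = i := by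
  by_contra hji
  exact h.not_disjoint j i hji (hi ▸ disjoint_empty_right _)

lemma restrict [DecidableEq α] (h : IsBollobasSystem A B) (x : α) :
    IsBollobasSystem (fun i : {i // x ∉ A i} ↦ A i) (fun i ↦ (B i).erase x) where
  disjoint_self i := (h.disjoint_self i).mono_right (erase_subset _ _)
  not_disjoint i j hij hdisj := by
    obtain ⟨y, hyA, hyB⟩ := not_disjoint_iff.1 (h.not_disjoint i j (Subtype.coe_ne_coe.2 hij))
    exact disjoint_left.1 hdisj hyA (mem_erase.2 ⟨fun hyx ↦ i.2 (hyx ▸ hyA), hyB⟩)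

theorem sum_pairWeight_le_one_of_subset [DecidableEq α] [Fintype ι] (h : IsBollobasSystem A B)
    (U : Finset α) (hU : ∀ i, A i ∪ B i ⊆ U) : ∑ i, pairWeight (A i) (B i) ≤ 1 := by
  induction U using Finset.strongInduction generalizing ι with
  | H U ih =>
  rcases isEmpty_or_nonempty ι with hι | ⟨⟨i₀⟩⟩
  · simp
  by_cases hB : ∃ i, B i = ∅
  · obtain ⟨i, hi⟩ := hB
    have : Subsingleton ι :=
      ⟨fun j k ↦ (h.eq_of_eq_empty hi j).trans (h.eq_of_eq_empty hi k).symm⟩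
    rw [Fintype.sum_subsingleton _ i, hi, pairWeight_empty_right]
  push Not at hB
  have hUpos : (0 : ℝ) < #U := by
    obtain ⟨y, hy⟩ := hB i₀
    exact_mod_cast card_pos.2 ⟨y, hU i₀ (mem_union_right _ hy)⟩
  have h_restrict (x : α) (hx : x ∈ U) :
      ∑ i with x ∉ A i, pairWeight (A i) ((B i).erase x) ≤ 1 := by
    rw [sum_subtype (p := fun i ↦ x ∉ A i) _ (by simp)]
    refine ih (U.erase x) (erase_ssubset hx) (h.restrict x) fun i ↦ ?_
    rw [← erase_eq_of_notMem i.2, ← erase_union_distrib]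
    exact erase_subset_erase x (hU i)
  refine le_of_mul_le_mul_left ?_ hUpos
  calc (#U : ℝ) * ∑ i, pairWeight (A i) (B i)
      = ∑ i, ∑ x ∈ U \ A i, pairWeight (A i) ((B i).erase x) := by
        rw [mul_sum]
        exact sum_congr rfl fun i _ ↦
          (sum_pairWeight_erase (h.disjoint_self i) (hU i) (hB i)).symm
    _ = ∑ x ∈ U, ∑ i with x ∉ A i, pairWeight (A i) ((B i).erase x) :=
        sum_comm' fun i x ↦ by simp [and_comm]
    _ ≤ ∑ _x ∈ U, 1 := sum_le_sum h_restrict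
    _ = #U * 1 := by simp

end IsBollobasSystem

/-- Bollobás's weighted Two Families Theorem. -/
theorem weighted_two_families (m : ℕ) (A B : Fin m → Finset ℕ)
    (hdisj : ∀ i, A i ∩ B i = ∅)
    (hcross : ∀ i j, i ≠ j → A i ∩ B j ≠ ∅) :
    ∑ i, (1 : ℝ) / (((A i).card + (B i).card).choose (A i).card) ≤ 1 := by
  have h : IsBollobasSystem A B :=
    ⟨fun i ↦ disjoint_iff_inter_eq_empty.2 (hdisj i),
      fun i j hij ↦ by rw [disjoint_iff_inter_eq_empty]; exact hcross i j hij⟩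
  exact h.sum_pairWeight_le_one_of_subset _ fun i ↦
    subset_biUnion_of_mem (fun j ↦ A j ∪ B j) (mem_univ i)
end

section
/- Let (A_1, B_1), …, (A_m, B_m) be pairs of non-trivial linear subspaces of V = ℝ^N with dim A_i ≤ a and dim B_i ≤ b for every i. Suppose: (i) dim(A_i ∩ B_i) = 0 for 1 ≤ i ≤ m; and (ii) dim(A_i ∩ B_j) > 0 for 1 ≤ i < j ≤ m. Then m ≤ C(a+b, a). -/
/-!
Lovász's exterior algebra argument. A generic linear map to `ℝ^(a+b)` is injective on every
`A i ⊔ B j`, so it preserves both the disjointness of `A i` and `B i` and the skewness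
`A i ⊓ B j ≠ ⊥`; after that each `A i` can be enlarged to dimension exactly `a` while staying
disjoint from `B i`. The wedge `x i ∈ ⋀^a` of a basis of `A i` and the wedge `y j` of a basis
of `B j` satisfy `x i ∧ y j = 0` exactly when `A i` and `B j` meet, so the matrix `(x i ∧ y j)`
is triangular with nonzero diagonal and the `x i` are linearly independent in a space of
dimension `(a + b).choose a`.
-/

open Module Submodule

section ExteriorAlgebra

variable {K V : Type*} [Field K] [AddCommGroup V] [Module K V]

theorem ExteriorAlgebra.ιMulti_eq_zero_iff {n : ℕ} {v : Fin n → V} :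
    ιMulti K n v = 0 ↔ ¬LinearIndependent K v := by
  refine ⟨fun h hv => ?_, (ιMulti K n).map_linearDependent v⟩
  have := (exteriorPower.ιMulti_family_linearIndependent_field n hv).ne_zero
    (Set.powersetCard.ofFinEmbEquiv (RelEmbedding.refl (· ≤ ·)))
  simp only [exteriorPower.ιMulti_family, Equiv.symm_apply_apply] at this
  exact this (Subtype.ext h)

theorem linearIndependent_fin_append_iff {m n : ℕ} {u : Fin m → V} {w : Fin n → V} :
    LinearIndependent K (Fin.append u w) ↔ LinearIndependent K u ∧ LinearIndependent K w ∧
      Disjoint (span K (Set.range u)) (span K (Set.range w)) := by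
  rw [← linearIndependent_equiv finSumFinEquiv, linearIndependent_sum]
  simp [Function.comp_def]

/-- Up to a nonzero scalar this does not depend on the chosen basis of `S`. -/
noncomputable def Submodule.pluckerVector [FiniteDimensional K V] (S : Submodule K V) :
    ExteriorAlgebra K V :=
  ExteriorAlgebra.ιMulti K (finrank K S) (S.subtype ∘ finBasis K S)

variable [FiniteDimensional K V]

theorem Submodule.pluckerVector_mem_exteriorPower (S : Submodule K V) :
    S.pluckerVector ∈ ⋀[K]^(finrank K S) V :=
  ExteriorAlgebra.ιMulti_range K _ ⟨_, rfl⟩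

theorem Submodule.pluckerVector_mul_eq_zero_iff (S T : Submodule K V) :
    S.pluckerVector * T.pluckerVector = 0 ↔ ¬Disjoint S T := by
  have hspan (S : Submodule K V) : span K (Set.range (S.subtype ∘ finBasis K S)) = S := by
    rw [Set.range_comp, span_image, (finBasis K S).span_eq, map_subtype_top]
  have hli (S : Submodule K V) : LinearIndependent K (S.subtype ∘ finBasis K S) :=
    (finBasis K S).linearIndependent.map' S.subtype S.ker_subtype
  rw [pluckerVector, pluckerVector, ExteriorAlgebra.ιMulti_mul_ιMulti,
    ExteriorAlgebra.ιMulti_eq_zero_iff, linearIndependent_fin_append_iff, hspan, hspan]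
  simp only [hli, true_and]

end ExteriorAlgebra

theorem LinearIndependent.of_triangular_bilin {ι K M N P : Type*} [Fintype ι] [LinearOrder ι]
    [Field K] [AddCommGroup M] [Module K M] [AddCommGroup N] [Module K N] [AddCommGroup P]
    [Module K P] (B : M →ₗ[K] N →ₗ[K] P) (x : ι → M) (y : ι → N)
    (hlt : ∀ i j, i < j → B (x i) (y j) = 0) (hdiag : ∀ i, B (x i) (y i) ≠ 0) :
    LinearIndependent K x := by
  rw [Fintype.linearIndependent_iff]
  intro c hc j
  induction j using WellFoundedGT.induction with
  | _ j ih =>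
    have hsum : ∑ i, c i • B (x i) (y j) = 0 := by
      simpa using congrArg (fun z => B z (y j)) hc
    rw [Finset.sum_eq_single j (fun i _ hij => ?_) (by simp)] at hsum
    · exact (smul_eq_zero.mp hsum).resolve_right (hdiag j)
    · rcases hij.lt_or_gt with h | h
      · simp [hlt i j h]
      · simp [ih i h]

theorem Submodule.card_le_choose_finrank_of_skew {K V ι : Type*} [Field K] [AddCommGroup V]
    [Module K V] [FiniteDimensional K V] [Fintype ι] [LinearOrder ι] {a : ℕ}
    (A B : ι → Submodule K V) (hA : ∀ i, finrank K (A i) = a)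
    (hdisj : ∀ i, Disjoint (A i) (B i)) (hskew : ∀ i j, i < j → ¬Disjoint (A i) (B j)) :
    Fintype.card ι ≤ (finrank K V).choose a := by
  let x (i : ι) : ⋀[K]^a V := ⟨(A i).pluckerVector, hA i ▸ (A i).pluckerVector_mem_exteriorPower⟩
  have hx : LinearIndependent K x :=
    .of_triangular_bilin ((LinearMap.mul K _).compl₁₂ (⋀[K]^a V).subtype .id) x
      (fun j => (B j).pluckerVector)
      (fun i j hij => ((A i).pluckerVector_mul_eq_zero_iff (B j)).mpr (hskew i j hij))
      (fun i => mt ((A i).pluckerVector_mul_eq_zero_iff (B i)).mp (not_not.mpr (hdisj i)))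
  simpa [exteriorPower.finrank_eq] using hx.fintype_card_le_finrank

theorem Submodule.disjoint_map_iff_of_disjoint_ker {R M M₂ : Type*} [Ring R] [AddCommGroup M]
    [Module R M] [AddCommGroup M₂] [Module R M₂] {f : M →ₗ[R] M₂} {p q : Submodule R M}
    (hker : Disjoint (p ⊔ q) (LinearMap.ker f)) :
    Disjoint (p.map f) (q.map f) ↔ Disjoint p q := by
  rw [LinearMap.disjoint_ker] at hker
  simp only [disjoint_def]
  constructor
  · exact fun h x hp hq => hker x (mem_sup_left hp) (h _ (mem_map_of_mem hp) (mem_map_of_mem hq))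
  · rintro h _ ⟨x, hx, rfl⟩ ⟨y, hy, hxy⟩
    obtain rfl : y = x :=
      sub_eq_zero.mp (hker _ (sub_mem (mem_sup_right hy) (mem_sup_left hx)) (by simp [hxy]))
    simp [h y hx hy]

section GenericPosition

variable {K V ι : Type*} [Field K] [Infinite K] [AddCommGroup V] [Module K V]
  [FiniteDimensional K V] [Finite ι] {U : ι → Submodule K V}

theorem Submodule.exists_notMem_forall_disjoint_sup_span_singleton {P : Submodule K V}
    (hP : ∀ k, Disjoint (U k) P) (hPV : finrank K P < finrank K V)
    (hU : ∀ k, finrank K (U k) + finrank K P < finrank K V) :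
    ∃ v ∉ P, ∀ k, Disjoint (U k) (P ⊔ K ∙ v) := by
  have ne_top {S : Submodule K V} (h : finrank K S < finrank K V) : S ≠ ⊤ := by
    rintro rfl
    exact h.ne (finrank_top K V)
  obtain ⟨v, hv⟩ := exists_forall_notMem_of_forall_ne_top
    (fun o : Option ι => o.elim P fun k => U k ⊔ P) <| by
      rintro (_ | k)
      · exact ne_top hPV
      · exact ne_top ((finrank_add_le_finrank_add_finrank _ _).trans_lt (hU k))
  exact ⟨v, hv none, fun k =>
    (hP k).disjoint_sup_right_of_disjoint_sup_left (disjoint_span_singleton_of_notMem (hv k))⟩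

theorem Submodule.exists_le_finrank_eq_forall_disjoint {P : Submodule K V}
    (hP : ∀ k, Disjoint (U k) P) {n : ℕ} (hPn : finrank K P ≤ n) (hnV : n ≤ finrank K V)
    (hU : ∀ k, finrank K (U k) + n ≤ finrank K V) :
    ∃ Q, P ≤ Q ∧ finrank K Q = n ∧ ∀ k, Disjoint (U k) Q := by
  induction n with
  | zero => exact ⟨P, le_rfl, by omega, hP⟩
  | succ n ih =>
    rcases hPn.eq_or_lt with h | h
    · exact ⟨P, le_rfl, h, hP⟩
    obtain ⟨Q, hPQ, hQ, hQU⟩ := ih (by omega) (by omega) (fun k => by have := hU k; omega)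
    obtain ⟨v, hv, hvU⟩ := exists_notMem_forall_disjoint_sup_span_singleton hQU (by omega)
      (fun k => by have := hU k; omega)
    exact ⟨Q ⊔ K ∙ v, hPQ.trans le_sup_left, by rw [finrank_sup_span_singleton hv, hQ], hvU⟩

theorem exists_linearMap_forall_disjoint_ker (W : Type*) [AddCommGroup W] [Module K W]
    [FiniteDimensional K W] (hU : ∀ k, finrank K (U k) ≤ finrank K W) :
    ∃ f : V →ₗ[K] W, ∀ k, Disjoint (U k) (LinearMap.ker f) := by
  obtain ⟨Q, -, hQ, hQU⟩ := exists_le_finrank_eq_forall_disjoint (U := U) (P := ⊥)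
    (n := finrank K V - finrank K W) (fun _ => disjoint_bot_right) (by simp) (by omega)
    (fun k => by have := hU k; have := (U k).finrank_le; omega)
  obtain ⟨g, hg⟩ := finrank_le_iff_exists_linearMap.mp
    (show finrank K (V ⧸ Q) ≤ finrank K W by have := Q.finrank_quotient_add_finrank; omega)
  refine ⟨g ∘ₗ Q.mkQ, fun k => ?_⟩
  rw [LinearMap.ker_comp_of_ker_eq_bot _ (LinearMap.ker_eq_bot.mpr hg), ker_mkQ]
  exact hQU k

theorem Submodule.card_le_choose_of_skew [Fintype ι] [LinearOrder ι] (A B : ι → Submodule K V)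
    {a b : ℕ} (ha : ∀ i, finrank K (A i) ≤ a) (hb : ∀ i, finrank K (B i) ≤ b)
    (hdisj : ∀ i, Disjoint (A i) (B i)) (hskew : ∀ i j, i < j → ¬Disjoint (A i) (B j)) :
    Fintype.card ι ≤ (a + b).choose a := by
  obtain ⟨f, hf⟩ := exists_linearMap_forall_disjoint_ker (U := fun p : ι × ι => A p.1 ⊔ B p.2)
    (Fin (a + b) → K) fun p => by
      simpa using (finrank_add_le_finrank_add_finrank _ _).trans (add_le_add (ha p.1) (hb p.2))
  have hmap (i j : ι) : Disjoint ((A i).map f) ((B j).map f) ↔ Disjoint (A i) (B j) :=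
    disjoint_map_iff_of_disjoint_ker (hf (i, j))
  have hext (i : ι) : ∃ A', (A i).map f ≤ A' ∧ finrank K A' = a ∧ Disjoint ((B i).map f) A' :=
    (exists_le_finrank_eq_forall_disjoint (U := fun _ : Unit => (B i).map f)
      (fun _ => ((hmap i i).mpr (hdisj i)).symm) ((finrank_map_le _ _).trans (ha i)) (by simp)
      (fun _ => by simpa [add_comm] using (finrank_map_le f (B i)).trans (hb i))).imp
      fun _ h => ⟨h.1, h.2.1, h.2.2 ()⟩
  choose A' hAA' hA' hA'B using hext
  simpa using card_le_choose_finrank_of_skew A' (fun i => (B i).map f) hA'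
    (fun i => (hA'B i).symm) (fun i j hij h => hskew i j hij ((hmap i j).mp (h.mono_left (hAA' i))))

end GenericPosition

theorem uniform_skew_two_families_subspaces_general (N m a b : ℕ)
    (A B : Fin m → Submodule ℝ (Fin N → ℝ))
    (ha : ∀ i, Module.finrank ℝ ↥(A i) ≤ a) (hb : ∀ i, Module.finrank ℝ ↥(B i) ≤ b)
    (hdisj : ∀ i, Module.finrank ℝ ↥(A i ⊓ B i) = 0)
    (hskew : ∀ i j, i < j → 0 < Module.finrank ℝ ↥(A i ⊓ B j)) :
    m ≤ (a + b).choose a := by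
  simpa using card_le_choose_of_skew A B ha hb
    (fun i => disjoint_iff.mpr (finrank_eq_zero.mp (hdisj i)))
    (fun i j hij h => (hskew i j hij).ne' (by rw [disjoint_iff.mp h, finrank_bot]))

/-- The uniform skew subspace Two Families Theorem (Lovász, Frankl). -/
theorem uniform_skew_two_families_subspaces (N m a b : ℕ)
    (A B : Fin m → Submodule ℝ (Fin N → ℝ))
    (hA : ∀ i, A i ≠ ⊥) (hB : ∀ i, B i ≠ ⊥)
    (ha : ∀ i, Module.finrank ℝ ↥(A i) ≤ a) (hb : ∀ i, Module.finrank ℝ ↥(B i) ≤ b)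
    (hdisj : ∀ i, Module.finrank ℝ ↥(A i ⊓ B i) = 0)
    (hskew : ∀ i j, i < j → 0 < Module.finrank ℝ ↥(A i ⊓ B j)) :
    m ≤ (a + b).choose a :=
  uniform_skew_two_families_subspaces_general N m a b A B ha hb hdisj hskew
end

section
/- Let (A_1, B_1), …, (A_m, B_m) be pairs of finite sets with |A_i| = a and |B_i| = b for every i. Suppose: (i) A_i ∩ B_i = ∅ for 1 ≤ i ≤ m; and (ii) A_i ∩ B_j ≠ ∅ for 1 ≤ i < j ≤ m. Then m ≤ C(a+b, b). -/
/-!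
Lovász's exterior-algebra argument. Send each ground element `t` to the point
`(1, t, …, t ^ (a + b - 1))` of the moment curve in `ℚ ^ (a + b)`; by Vandermonde, `a + b` such
points are linearly independent iff they are distinct. With `xᵢ`, `yⱼ` the point tuples of `Aᵢ`
and `Bⱼ`, put `wⱼ := ∧ yⱼ ∈ ⋀ᵇ ℚ ^ (a + b)` and let `φᵢ` be the linear form `∧ y ↦ det (xᵢ, y)`.
Then `φᵢ wⱼ = det (xᵢ, yⱼ)` vanishes for `i < j`, since `Aᵢ` meets `Bⱼ`, and not for `i = j`, since
`Aᵢ` and `Bᵢ` are disjoint. This triangular pairing makes the `wⱼ` linearly independent in a space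
of dimension `C(a + b, b)`.
-/

open Function

theorem LinearIndependent.of_isLowerTriangular_pairing {K M ι : Type*} [Field K]
    [AddCommGroup M] [Module K M] [Fintype ι] [LinearOrder ι] (φ : ι → Module.Dual K M)
    (v : ι → M) (h_lt : ∀ i j, i < j → φ i (v j) = 0) (h_diag : ∀ i, φ i (v i) ≠ 0) :
    LinearIndependent K v := by
  let N : Matrix ι ι K := .of fun i j => φ i (v j)
  have hN : N.det ≠ 0 := by
    rw [Matrix.det_of_isLowerTriangular N fun i j hij => h_lt i j hij]
    exact Finset.prod_ne_zero_iff.mpr fun i _ => h_diag i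
  exact .of_comp (LinearMap.pi φ) (Matrix.linearIndependent_cols_of_det_ne_zero hN)

namespace AlternatingMap

variable {R M N α β : Type*} [CommSemiring R] [AddCommMonoid M] [Module R M] [AddCommMonoid N]
  [Module R N]

def currySumLeft (f : M [⋀^α ⊕ β]→ₗ[R] N) (x : α → M) : M [⋀^β]→ₗ[R] N :=
  { f.toMultilinearMap.currySum x with
    map_eq_zero_of_eq' := fun y i j hy hij =>
      f.map_eq_zero_of_eq (Sum.elim x y) (i := .inr i) (j := .inr j) hy (by simpa using hij) }

@[simp]
theorem currySumLeft_apply (f : M [⋀^α ⊕ β]→ₗ[R] N) (x : α → M) (y : β → M) :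
    f.currySumLeft x y = f (Sum.elim x y) := rfl

end AlternatingMap

theorem card_le_choose_of_skew_alternatingMap {K V ι : Type*} [Field K] [AddCommGroup V]
    [Module K V] [FiniteDimensional K V] [Fintype ι] [LinearOrder ι] {a b : ℕ}
    (D : V [⋀^Fin a ⊕ Fin b]→ₗ[K] K) (x : ι → Fin a → V) (y : ι → Fin b → V)
    (h_lt : ∀ i j, i < j → D (Sum.elim (x i) (y j)) = 0)
    (h_diag : ∀ i, D (Sum.elim (x i) (y i)) ≠ 0) :
    Fintype.card ι ≤ (Module.finrank K V).choose b := by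
  let φ i := exteriorPower.alternatingMapLinearEquiv (D.currySumLeft (x i))
  let w j := exteriorPower.ιMulti K b (y j)
  have hφw : ∀ i j, φ i (w j) = D (Sum.elim (x i) (y j)) := fun i j => by
    simp [φ, w, exteriorPower.alternatingMapLinearEquiv_apply_ιMulti]
  have hw : LinearIndependent K w := .of_isLowerTriangular_pairing φ w
    (fun i j hij => (hφw i j).trans (h_lt i j hij)) fun i => (hφw i i).trans_ne (h_diag i)
  simpa [exteriorPower.finrank_eq] using hw.fintype_card_le_finrank

def momentCurve {R : Type*} [Monoid R] (n : ℕ) (t : R) : Fin n → R := fun k => t ^ (k : ℕ)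

theorem detRowAlternating_domDomCongr_momentCurve_ne_zero {R ι : Type*} [CommRing R]
    [IsDomain R] {n : ℕ} (e : Fin n ≃ ι) {u : ι → R} (hu : Injective u) :
    (Matrix.detRowAlternating.domDomCongr e) (momentCurve n ∘ u) ≠ 0 := by
  rw [AlternatingMap.domDomCongr_apply]
  exact Matrix.det_vandermonde_ne_zero_iff.mpr (hu.comp e.injective)

namespace Finset

variable {α : Type*} [LinearOrder α]

theorem exists_orderEmbOfFin_eq {s : Finset α} {k : ℕ} (h : s.card = k) {x : α} (hx : x ∈ s) :
    ∃ p, s.orderEmbOfFin h p = x := by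
  rw [← Set.mem_range, range_orderEmbOfFin]
  exact hx

theorem injective_sumElim_orderEmbOfFin {s t : Finset α} {k l : ℕ} (hs : s.card = k)
    (ht : t.card = l) (hst : Disjoint s t) :
    Injective (Sum.elim (s.orderEmbOfFin hs) (t.orderEmbOfFin ht)) :=
  (s.orderEmbOfFin hs).injective.sumElim (t.orderEmbOfFin ht).injective fun p q hpq =>
    disjoint_left.mp hst (s.orderEmbOfFin_mem hs p) (hpq ▸ t.orderEmbOfFin_mem ht q)

end Finset

/-- The uniform skew Two Families Theorem. -/
theorem uniform_skew_two_families (m a b : ℕ) (A B : Fin m → Finset ℕ)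
    (hA : ∀ i, (A i).card = a) (hB : ∀ i, (B i).card = b)
    (hdisj : ∀ i, A i ∩ B i = ∅)
    (hskew : ∀ i j, i < j → A i ∩ B j ≠ ∅) :
    m ≤ (a + b).choose b := by
  let D : (Fin (a + b) → ℚ) [⋀^Fin a ⊕ Fin b]→ₗ[ℚ] ℚ :=
    Matrix.detRowAlternating.domDomCongr finSumFinEquiv.symm
  let x i := momentCurve (a + b) ∘ ((↑) : ℕ → ℚ) ∘ (A i).orderEmbOfFin (hA i)
  let y j := momentCurve (a + b) ∘ ((↑) : ℕ → ℚ) ∘ (B j).orderEmbOfFin (hB j)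
  have h_lt : ∀ i j, i < j → D (Sum.elim (x i) (y j)) = 0 := by
    intro i j hij
    obtain ⟨t, ht⟩ := Finset.nonempty_iff_ne_empty.mpr (hskew i j hij)
    obtain ⟨p, hp⟩ := Finset.exists_orderEmbOfFin_eq (hA i) (Finset.mem_inter.mp ht).1
    obtain ⟨q, hq⟩ := Finset.exists_orderEmbOfFin_eq (hB j) (Finset.mem_inter.mp ht).2
    exact D.map_eq_zero_of_eq _ (i := .inl p) (j := .inr q) (by simp [x, y, hp, hq])
      Sum.inl_ne_inr
  have h_diag : ∀ i, D (Sum.elim (x i) (y i)) ≠ 0 := fun i => by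
    have hpts := Finset.injective_sumElim_orderEmbOfFin (hA i) (hB i)
      (Finset.disjoint_iff_inter_eq_empty.mpr (hdisj i))
    simpa only [x, y, ← Sum.comp_elim] using
      detRowAlternating_domDomCongr_momentCurve_ne_zero _ (Nat.cast_injective.comp hpts)
  simpa using card_le_choose_of_skew_alternatingMap D x y h_lt h_diag
end
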